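/- arXiv:1910.02446 — 4 statements merged into one kernel-verified Lean document; each statement's English description precedes it below -/
import Mathlib

section
/- Let F be a class of reflexive and transitive Kripke frames closed under point-generated subframes. Then for any modal formulas Γ ∪ {φ}: Γ ⊨^g_F φ iff □Γ ⊨_F □φ iff □Γ ⊨_F φ. -/
/-- Formulas of the basic modal language. -/
inductive Form : Type where
  | var : ℕ → Form
  | bot : Form
  | imp : Form → Form → Form
  | box : Form → Form

def Form.neg (φ : Form) : Form := .imp φ .bot
def Form.dia (φ : Form) : Form := .neg (.box (.neg φ))
def Form.or (φ ψ : Form) : Form := .imp (.neg φ) ψ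
def Form.and (φ ψ : Form) : Form := .neg (.imp φ (.neg ψ))

/-- A Kripke frame: a nonempty set of worlds with an accessibility relation. -/
structure Frame : Type 1 where
  W : Type
  R : W → W → Prop
  nonempty : Nonempty W

/-- Truth at a world of a model. -/
def Frame.sat (F : Frame) (V : ℕ → F.W → Prop) : F.W → Form → Prop
  | w, .var n => V n w
  | _, .bot => False
  | w, .imp φ ψ => F.sat V w φ → F.sat V w ψ
  | w, .box φ => ∀ u, F.R w u → F.sat V u φ

/-- Local consequence with respect to a class of frames. -/
def localConseq (C : Frame → Prop) (Γ : Set Form) (φ : Form) : Prop :=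
  ∀ F, C F → ∀ V : ℕ → F.W → Prop, ∀ w : F.W,
    (∀ ψ ∈ Γ, F.sat V w ψ) → F.sat V w φ

/-- Global consequence with respect to a class of frames. -/
def globalConseq (C : Frame → Prop) (Γ : Set Form) (φ : Form) : Prop :=
  ∀ F, C F → ∀ V : ℕ → F.W → Prop,
    (∀ ψ ∈ Γ, ∀ w : F.W, F.sat V w ψ) → ∀ w : F.W, F.sat V w φ

/-- □ⁿφ -/
def boxIter : ℕ → Form → Form
  | 0, φ => φ
  | n+1, φ => .box (boxIter n φ)

/-- ◇ⁿφ -/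
def diaIter : ℕ → Form → Form
  | 0, φ => φ
  | n+1, φ => .dia (diaIter n φ)

/-- □^ωΓ = {□ⁿψ | n ∈ ℕ, ψ ∈ Γ} -/
def boxOmega (Γ : Set Form) : Set Form :=
  {χ | ∃ n ψ, ψ ∈ Γ ∧ χ = boxIter n ψ}

/-- The subframe of `F` generated by the point `w`. -/
def Frame.gen (F : Frame) (w : F.W) : Frame where
  W := {v : F.W // Relation.ReflTransGen F.R w v}
  R a b := F.R a.1 b.1
  nonempty := ⟨⟨w, Relation.ReflTransGen.refl⟩⟩

/-- A class of frames is closed under point-generated subframes. -/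
def closedGen (C : Frame → Prop) : Prop :=
  ∀ F, C F → ∀ w : F.W, C (F.gen w)

/-- Modal-free (purely propositional) formulas. -/
def modalFree : Form → Prop
  | .var _ => True
  | .bot => True
  | .imp φ ψ => modalFree φ ∧ modalFree ψ
  | .box _ => False

/-!
The three conditions form a cycle of implications. If `□Γ` holds at `w`, then on a preorder `Γ`
holds throughout the subframe generated by `w`, which lies in the class; a global consequence
`φ` therefore holds at `w`, since truth is invariant under passing to generated subframes. By
transitivity `□Γ` propagates to every successor, so `□Γ ⊨ φ` upgrades to `□Γ ⊨ □φ`. Finally, in a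
model where `Γ` is globally true so is `□Γ`, hence `□φ`, and by reflexivity `φ`.
-/

theorem Relation.ReflTransGen.of_reflexive_of_transitive {α : Type*} {r : α → α → Prop}
    (hr : Reflexive r) (ht : Transitive r) {a b : α} (h : Relation.ReflTransGen r a b) : r a b :=
  h.trans_induction_on hr id fun _ _ hab hbc => ht hab hbc

namespace Frame

theorem sat_gen (F : Frame) (w : F.W) (V : ℕ → F.W → Prop) (φ : Form) (v : (F.gen w).W) :
    (F.gen w).sat (fun n a => V n a.1) v φ ↔ F.sat V v.1 φ := by
  induction φ generalizing v with
  | var n => rfl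
  | bot => rfl
  | imp φ ψ ihφ ihψ => simp only [Frame.sat, ihφ, ihψ]
  | box φ ih =>
    refine ⟨fun h u hvu => ?_, fun h u hvu => (ih u).mpr (h u.1 hvu)⟩
    exact (ih ⟨u, v.2.tail hvu⟩).mp (h ⟨u, v.2.tail hvu⟩ hvu)

end Frame

section

variable {C : Frame → Prop} {Γ : Set Form} {φ : Form}

theorem localConseq_box_image_of_globalConseq (hrefl : ∀ F, C F → Reflexive F.R)
    (htrans : ∀ F, C F → Transitive F.R) (hgen : closedGen C) (h : globalConseq C Γ φ) :
    localConseq C (Form.box '' Γ) φ := by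
  intro F hF V w hw
  have hΓ : ∀ ψ ∈ Γ, ∀ v : (F.gen w).W, (F.gen w).sat (fun n a => V n a.1) v ψ :=
    fun ψ hψ v => (F.sat_gen w V ψ v).mpr <|
      hw _ ⟨ψ, hψ, rfl⟩ v.1 (v.2.of_reflexive_of_transitive (hrefl F hF) (htrans F hF))
  exact (F.sat_gen w V φ ⟨w, .refl⟩).mp (h _ (hgen F hF w) _ hΓ _)

theorem localConseq_box_image_box (htrans : ∀ F, C F → Transitive F.R)
    (h : localConseq C (Form.box '' Γ) φ) : localConseq C (Form.box '' Γ) (.box φ) := by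
  rintro F hF V w hw u hwu
  refine h F hF V u ?_
  rintro _ ⟨ψ, hψ, rfl⟩ v huv
  exact hw _ ⟨ψ, hψ, rfl⟩ v (htrans F hF hwu huv)

theorem globalConseq_of_localConseq_box_image (hrefl : ∀ F, C F → Reflexive F.R)
    (h : localConseq C (Form.box '' Γ) (.box φ)) : globalConseq C Γ φ := by
  intro F hF V hΓ w
  refine h F hF V w ?_ w (hrefl F hF w)
  rintro _ ⟨ψ, hψ, rfl⟩ u _
  exact hΓ ψ hψ u

end

/-- for classes of reflexive and transitive frames closed under
point-generated subframes, Γ ⊨^g_F φ iff □Γ ⊨_F □φ iff □Γ ⊨_F φ. -/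
theorem stmt8 (C : Frame → Prop)
    (hrefl : ∀ F, C F → Reflexive F.R)
    (htrans : ∀ F, C F → Transitive F.R)
    (hgen : closedGen C) (Γ : Set Form) (φ : Form) :
    (globalConseq C Γ φ ↔ localConseq C (Form.box '' Γ) (.box φ)) ∧
    (localConseq C (Form.box '' Γ) (.box φ) ↔ localConseq C (Form.box '' Γ) φ) := by
  have global_local := localConseq_box_image_of_globalConseq hrefl htrans hgen (Γ := Γ) (φ := φ)
  have local_box := localConseq_box_image_box htrans (Γ := Γ) (φ := φ)
  have box_global := globalConseq_of_localConseq_box_image hrefl (Γ := Γ) (φ := φ)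
  exact ⟨⟨local_box ∘ global_local, box_global⟩,
    ⟨global_local ∘ box_global, local_box⟩⟩
end

section
/- For any modal formulas Γ ∪ {φ}, the following are equivalent: (1) Γ is globally ⊨-related to φ over the class S5 of frames with equivalence relations (Γ ⊨^g_{S5} φ); (2) □Γ ⊨_{S5} □φ; (3) □Γ ⊨_{S5} φ; (4) □Γ ⊨_{K45} □φ, where K45 is the class of transitive Euclidean frames; (5) □Γ ⊨_{KD45} □φ, where KD45 is the class of serial transitive Euclidean frames. -/
/-- The class of S5 frames: equivalence relations. -/
def S5 : Frame → Prop := fun F => Equivalence F.R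

/-- The class of K45 frames: transitive Euclidean relations. -/
def K45 : Frame → Prop := fun F =>
  Transitive F.R ∧ ∀ x y z : F.W, F.R x y → F.R x z → F.R y z

/-- The class of KD45 frames: serial transitive Euclidean relations. -/
def KD45 : Frame → Prop := fun F =>
  (∀ x : F.W, ∃ y, F.R x y) ∧ Transitive F.R ∧
    ∀ x y z : F.W, F.R x y → F.R x z → F.R y z

/-!
In a transitive Euclidean frame the successors of a point `w` form an `R`-closed cluster on which
`R` is an equivalence, so `□Γ` at `w` makes `Γ` globally true on an S5 frame whose truths are
those of the original model; global S5 consequence then yields `φ` at every successor of `w`.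
This gives (1) ⇒ (4). The remaining implications only use reflexivity and transitivity of S5
frames and the inclusions S5 ⊆ KD45 ⊆ K45.
-/

def Frame.restr (F : Frame) (S : Set F.W) (h : S.Nonempty) : Frame where
  W := S
  R a b := F.R a.1 b.1
  nonempty := h.to_subtype

theorem Frame.sat_restr (F : Frame) {S : Set F.W} (h : S.Nonempty)
    (closed : ∀ ⦃a b : F.W⦄, a ∈ S → F.R a b → b ∈ S) (V : ℕ → F.W → Prop) (χ : Form)
    (a : (F.restr S h).W) : (F.restr S h).sat (fun n a => V n a.1) a χ ↔ F.sat V a.1 χ := by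
  induction χ generalizing a with
  | var n => rfl
  | bot => rfl
  | imp χ₁ χ₂ ih₁ ih₂ => exact imp_congr (ih₁ a) (ih₂ a)
  | box χ ih =>
    exact ⟨fun hb u hu => (ih ⟨u, closed a.2 hu⟩).1 (hb ⟨u, closed a.2 hu⟩ hu),
      fun hb b hab => (ih b).2 (hb b.1 hab)⟩

theorem K45.s5_restr_succ {F : Frame} (hF : K45 F) {w : F.W} (h : {v | F.R w v}.Nonempty) :
    S5 (F.restr {v | F.R w v} h) :=
  ⟨fun a => hF.2 w a.1 a.1 a.2 a.2, fun {a b} _ => hF.2 w b.1 a.1 b.2 a.2,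
    fun hab hbc => hF.1 hab hbc⟩

theorem S5.kd45 {F : Frame} (hF : S5 F) : KD45 F :=
  ⟨fun x => ⟨x, hF.refl x⟩, fun _ _ _ => hF.trans,
    fun _ _ _ hxy hxz => hF.trans (hF.symm hxy) hxz⟩

theorem KD45.k45 {F : Frame} (hF : KD45 F) : K45 F := hF.2

theorem localConseq.mono {C D : Frame → Prop} (hCD : ∀ F, C F → D F) {Γ : Set Form} {φ : Form}
    (h : localConseq D Γ φ) : localConseq C Γ φ :=
  fun F hF => h F (hCD F hF)

section

variable {Γ : Set Form} {φ : Form}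

theorem globalConseq.localConseq_K45_box (h : globalConseq S5 Γ φ) :
    localConseq K45 (Form.box '' Γ) (.box φ) := by
  intro F hF V w hΓ u hwu
  rw [Set.forall_mem_image] at hΓ
  have hS : {v | F.R w v}.Nonempty := ⟨u, hwu⟩
  have closed : ∀ ⦃a b : F.W⦄, a ∈ {v | F.R w v} → F.R a b → b ∈ {v | F.R w v} :=
    fun _ _ ha hab => hF.1 ha hab
  refine (F.sat_restr hS closed V φ ⟨u, hwu⟩).1 <| h _ (hF.s5_restr_succ hS) _ ?_ _
  exact fun ψ hψ a => (F.sat_restr hS closed V ψ a).2 (hΓ hψ a.1 a.2)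

theorem globalConseq_S5_of_localConseq_box (h : localConseq S5 (Form.box '' Γ) (.box φ)) :
    globalConseq S5 Γ φ := by
  intro F hF V hΓ w
  refine h F hF V w ?_ w (hF.refl w)
  exact Set.forall_mem_image.2 fun ψ hψ u _ => hΓ ψ hψ u

theorem localConseq_S5_of_localConseq_box (h : localConseq S5 (Form.box '' Γ) (.box φ)) :
    localConseq S5 (Form.box '' Γ) φ :=
  fun F hF V w hΓ => h F hF V w hΓ w (hF.refl w)

theorem localConseq_S5_box_of_localConseq (h : localConseq S5 (Form.box '' Γ) φ) :
    localConseq S5 (Form.box '' Γ) (.box φ) := by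
  intro F hF V w hΓ u hwu
  rw [Set.forall_mem_image] at hΓ
  exact h F hF V u (Set.forall_mem_image.2 fun ψ hψ v huv => hΓ hψ v (hF.trans hwu huv))

end

/-- equivalent characterizations of global S5 consequence. -/
theorem stmt9 (Γ : Set Form) (φ : Form) :
    (globalConseq S5 Γ φ ↔ localConseq S5 (Form.box '' Γ) (.box φ)) ∧
    (localConseq S5 (Form.box '' Γ) (.box φ) ↔ localConseq S5 (Form.box '' Γ) φ) ∧
    (localConseq S5 (Form.box '' Γ) φ ↔ localConseq K45 (Form.box '' Γ) (.box φ)) ∧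
    (localConseq K45 (Form.box '' Γ) (.box φ) ↔
      localConseq KD45 (Form.box '' Γ) (.box φ)) := by
  have h14 : globalConseq S5 Γ φ → localConseq K45 (Form.box '' Γ) (.box φ) :=
    globalConseq.localConseq_K45_box
  have h45 : localConseq K45 (Form.box '' Γ) (.box φ) →
      localConseq KD45 (Form.box '' Γ) (.box φ) :=
    localConseq.mono fun _ => KD45.k45
  have h52 : localConseq KD45 (Form.box '' Γ) (.box φ) →
      localConseq S5 (Form.box '' Γ) (.box φ) :=
    localConseq.mono fun _ => S5.kd45
  have h21 := @globalConseq_S5_of_localConseq_box Γ φ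
  have h23 := @localConseq_S5_of_localConseq_box Γ φ
  have h32 := @localConseq_S5_box_of_localConseq Γ φ
  exact ⟨⟨fun h => h52 (h45 (h14 h)), h21⟩, ⟨h23, h32⟩,
    ⟨fun h => h14 (h21 (h32 h)), fun h => h23 (h52 (h45 h))⟩,
    ⟨h45, fun h => h14 (h21 (h52 h))⟩⟩
end

section
/- Let Γ be a set of modal-free (propositional) formulas and φ any modal formula. Then for any class of frames F whatsoever, Γ ⊨^g_F φ if and only if □^ωΓ ⊨_F φ. -/
/-!
Every `□ⁿψ` follows globally from `ψ`, which gives one direction. Conversely, if `□^ωΓ` holds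
at `w`, then `Γ` holds throughout the cone of worlds reachable from `w`. Change the valuation
outside that cone to copy the valuation at `w`: truth at `w` is unaffected, and since the
formulas of `Γ` are modal-free, every world outside the cone now agrees with `w` on them, so `Γ`
becomes globally true and global consequence yields `φ` at `w`.
-/

open Relation

namespace Frame

variable (F : Frame)

theorem sat_iff_of_modalFree {ψ : Form} (hψ : modalFree ψ) {V V' : ℕ → F.W → Prop}
    {w w' : F.W} (hV : ∀ n, V n w ↔ V' n w') : F.sat V w ψ ↔ F.sat V' w' ψ := by
  induction ψ with
  | var n => exact hV n
  | bot => exact Iff.rfl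
  | imp a b iha ihb => exact imp_congr (iha hψ.1) (ihb hψ.2)
  | box a _ => exact hψ.elim

theorem sat_congr_of_reflTransGen {V V' : ℕ → F.W → Prop} (φ : Form) {w : F.W}
    (hV : ∀ v, ReflTransGen F.R w v → ∀ n, (V n v ↔ V' n v)) :
    F.sat V w φ ↔ F.sat V' w φ := by
  induction φ generalizing w with
  | var n => exact hV w .refl n
  | bot => exact Iff.rfl
  | imp a b iha ihb => exact imp_congr (iha hV) (ihb hV)
  | box a iha =>
    exact forall_congr' fun u => forall_congr' fun hu =>
      iha fun v hv => hV v (.head hu hv)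

theorem sat_boxIter_of_reflTransGen {V : ℕ → F.W → Prop} {ψ : Form} {w v : F.W}
    (h : ∀ n, F.sat V w (boxIter n ψ)) (hwv : ReflTransGen F.R w v) :
    ∀ n, F.sat V v (boxIter n ψ) := by
  induction hwv with
  | refl => exact h
  | tail _ hR ih => exact fun n => ih (n + 1) _ hR

theorem sat_boxIter_of_forall_sat {V : ℕ → F.W → Prop} {ψ : Form}
    (h : ∀ w, F.sat V w ψ) (n : ℕ) (w : F.W) : F.sat V w (boxIter n ψ) := by
  induction n generalizing w with
  | zero => exact h w
  | succ n ih => exact fun u _ => ih u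

open Classical in
noncomputable def coneVal (V : ℕ → F.W → Prop) (w : F.W) : ℕ → F.W → Prop :=
  fun n v => if ReflTransGen F.R w v then V n v else V n w

theorem coneVal_of_reflTransGen (V : ℕ → F.W → Prop) {w v : F.W} (hv : ReflTransGen F.R w v)
    (n : ℕ) : F.coneVal V w n v ↔ V n v := by
  simp [coneVal, hv]

theorem coneVal_of_not_reflTransGen (V : ℕ → F.W → Prop) {w v : F.W}
    (hv : ¬ReflTransGen F.R w v) (n : ℕ) : F.coneVal V w n v ↔ V n w := by
  simp [coneVal, hv]

theorem sat_coneVal_of_modalFree {V : ℕ → F.W → Prop} {w : F.W} {ψ : Form}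
    (hψ : modalFree ψ) (h : ∀ n, F.sat V w (boxIter n ψ)) (v : F.W) :
    F.sat (F.coneVal V w) v ψ := by
  by_cases hv : ReflTransGen F.R w v
  · exact (F.sat_iff_of_modalFree hψ fun n => (F.coneVal_of_reflTransGen V hv n).symm).mp
      (F.sat_boxIter_of_reflTransGen h hv 0)
  · exact (F.sat_iff_of_modalFree hψ fun n => (F.coneVal_of_not_reflTransGen V hv n).symm).mp
      (h 0)

end Frame

theorem localConseq_boxOmega_of_globalConseq {C : Frame → Prop} {Γ : Set Form} {φ : Form}
    (hΓ : ∀ ψ ∈ Γ, modalFree ψ) (h : globalConseq C Γ φ) : localConseq C (boxOmega Γ) φ := by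
  intro F hF V w hw
  have hcone : ∀ ψ ∈ Γ, ∀ v, F.sat (F.coneVal V w) v ψ := fun ψ hψ =>
    F.sat_coneVal_of_modalFree (hΓ ψ hψ) fun n => hw _ ⟨n, ψ, hψ, rfl⟩
  exact (F.sat_congr_of_reflTransGen φ fun v hv n => (F.coneVal_of_reflTransGen V hv n).symm).mpr
    (h F hF _ hcone w)

theorem globalConseq_of_localConseq_boxOmega {C : Frame → Prop} {Γ : Set Form} {φ : Form}
    (h : localConseq C (boxOmega Γ) φ) : globalConseq C Γ φ := by
  intro F hF V hΓ w
  apply h F hF V w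
  rintro χ ⟨n, ψ, hψ, rfl⟩
  exact F.sat_boxIter_of_forall_sat (hΓ ψ hψ) n w

/-- for modal-free premises, over any class of frames,
global consequence equals local consequence from □^ωΓ. -/
theorem stmt10 (C : Frame → Prop) (Γ : Set Form) (φ : Form)
    (hΓ : ∀ ψ ∈ Γ, modalFree ψ) :
    globalConseq C Γ φ ↔ localConseq C (boxOmega Γ) φ :=
  ⟨localConseq_boxOmega_of_globalConseq hΓ, globalConseq_of_localConseq_boxOmega⟩
end

section
/- For any class of Kripke frames F: ◇◇φ ⊨^g_F ◇φ holds for all formulas φ if and only if every frame (W,R) in F is globally transitive, i.e., satisfies ∀w ∃x ∀y ∀z (Rxy ∧ Ryz → Rwz). -/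
/-!
A single world `x` all of whose two-step successors are successors of `w` transfers ◇◇φ at `x`
into ◇φ at `w`. Conversely, if no such `x` exists for `w`, then `p` true exactly outside `R(w)`
satisfies ◇◇p everywhere while ◇p fails at `w`.
-/

namespace Frame

variable (F : Frame)

def GloballyTransitive : Prop :=
  ∀ w : F.W, ∃ x : F.W, ∀ y z : F.W, F.R x y → F.R y z → F.R w z

def GlobalEntails (φ ψ : Form) : Prop :=
  ∀ V : ℕ → F.W → Prop, (∀ w, F.sat V w φ) → ∀ w, F.sat V w ψ

variable {F}

theorem sat_dia {V : ℕ → F.W → Prop} {w : F.W} {φ : Form} :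
    F.sat V w φ.dia ↔ ∃ u, F.R w u ∧ F.sat V u φ := by
  simp only [Form.dia, Form.neg, Frame.sat, imp_false, not_forall, not_not, exists_prop]

theorem sat_dia_dia {V : ℕ → F.W → Prop} {w : F.W} {φ : Form} :
    F.sat V w φ.dia.dia ↔ ∃ y z, F.R w y ∧ F.R y z ∧ F.sat V z φ := by
  simp only [sat_dia]
  grind

theorem GloballyTransitive.globalEntails_dia_dia (hF : F.GloballyTransitive) (φ : Form) :
    F.GlobalEntails φ.dia.dia φ.dia := by
  intro V hV w
  obtain ⟨x, hx⟩ := hF w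
  obtain ⟨y, z, hxy, hyz, hz⟩ := sat_dia_dia.mp (hV x)
  exact sat_dia.mpr ⟨z, hx y z hxy hyz, hz⟩

theorem globallyTransitive_of_globalEntails_dia_dia
    (hF : F.GlobalEntails (Form.var 0).dia.dia (Form.var 0).dia) : F.GloballyTransitive := by
  intro w
  by_contra! hw
  have hdd : ∀ v, F.sat (fun _ u => ¬ F.R w u) v (Form.var 0).dia.dia := fun v => by
    obtain ⟨y, z, hvy, hyz, hwz⟩ := hw v
    exact sat_dia_dia.mpr ⟨y, z, hvy, hyz, hwz⟩
  obtain ⟨u, hwu, hnwu⟩ := sat_dia.mp (hF _ hdd w)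
  exact hnwu hwu

theorem globallyTransitive_iff_globalEntails_dia_dia :
    F.GloballyTransitive ↔ ∀ φ : Form, F.GlobalEntails φ.dia.dia φ.dia :=
  ⟨fun hF => hF.globalEntails_dia_dia, fun h => globallyTransitive_of_globalEntails_dia_dia (h _)⟩

end Frame

theorem globalConseq_singleton_iff {C : Frame → Prop} {φ ψ : Form} :
    globalConseq C {φ} ψ ↔ ∀ F, C F → F.GlobalEntails φ ψ := by
  simp only [globalConseq, Frame.GlobalEntails, Set.mem_singleton_iff, forall_eq]

/-- ◇◇φ ⊨^g_F ◇φ for all φ iff every frame in F is globally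
transitive: ∀w ∃x ∀y ∀z (Rxy ∧ Ryz → Rwz). -/
theorem stmt13 (C : Frame → Prop) :
    (∀ φ : Form, globalConseq C {Form.dia (.dia φ)} (.dia φ)) ↔
      ∀ F, C F → ∀ w : F.W, ∃ x : F.W, ∀ y z : F.W,
        F.R x y → F.R y z → F.R w z := by
  simp only [globalConseq_singleton_iff]
  exact ⟨fun h F hF => Frame.globallyTransitive_iff_globalEntails_dia_dia.mpr fun φ => h φ F hF,
    fun h φ F hF => Frame.globallyTransitive_iff_globalEntails_dia_dia.mp (h F hF) φ⟩
end
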